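/- arXiv:nlin/0203024 — 4 statements merged into one kernel-verified Lean document; each statement's English description precedes it below -/
import Mathlib

section
/- Let E and F be real Banach spaces, Λ₁ > 0, γ ≥ 0 with 2 Λ₁² γ < 1. Let f : ℝ × E × F → ℝ satisfy |f(τ₁, x, y) − f(τ₂, x, y)| ≥ Λ₁^{−1} |τ₁ − τ₂|, |f(τ, x₁, y) − f(τ, x₂, y)| ≤ Λ₁ ‖x₁ − x₂‖, |f(τ, x, y₁) − f(τ, x, y₂)| ≤ Λ₁ ‖y₁ − y₂‖ for all arguments. Let g^s : ℝ × E × F → F satisfy ‖g^s(τ₁, x, y) − g^s(τ₂, x, y)‖ ≤ Π₁ |τ₁ − τ₂|, ‖g^s(τ, x₁, y) − g^s(τ, x₂, y)‖ ≤ Π₂ ‖x₁ − x₂‖, ‖g^s(τ, x, y₁) − g^s(τ, x, y₂)‖ ≤ Π₃ ‖y₁ − y₂‖ for constants Π₁, Π₂, Π₃ ≥ 0. Let x^u : ℝ → E and x^s : ℝ → F be γ-Lipschitz, and let τ⁻ : ℝ → ℝ satisfy f(τ⁻(τ), x^u(τ⁻(τ)), x^s(τ⁻(τ))) = τ for all τ.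 Define x₁^s(τ) = g^s(τ⁻(τ), x^u(τ⁻(τ)), x^s(τ⁻(τ))). Then for all τ₁, τ₂: ‖x₁^s(τ₁) − x₁^s(τ₂)‖ ≤ [Λ₁ (Π₁ + Π₂ γ + Π₃ γ) / (1 − 2 Λ₁² γ)] |τ₁ − τ₂|. -/
/-!
The backward hitting parameter `τ⁻` is Lipschitz with constant `Λ₁ / (1 - 2Λ₁²γ)`: along the
sections, `f` moves by at least `Λ₁⁻¹ |τ⁻(τ₁) - τ⁻(τ₂)|` through its time argument and by at
most `2Λ₁γ |τ⁻(τ₁) - τ⁻(τ₂)|` through the two others, while in total it moves by exactly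
`|τ₁ - τ₂|`. Along the sections `g^s` is Lipschitz in time with constant `Π₁ + Π₂γ + Π₃γ`, and
composing the two bounds gives the estimate.
-/

section PartialLipschitz

variable {E F G : Type*} [SeminormedAddGroup E] [SeminormedAddGroup F] [SeminormedAddGroup G]

theorem norm_sub_le_of_partial_lipschitz (φ : E → F → G) {K₂ K₃ : ℝ}
    (h₂ : ∀ x₁ x₂ y, ‖φ x₁ y - φ x₂ y‖ ≤ K₂ * ‖x₁ - x₂‖)
    (h₃ : ∀ x y₁ y₂, ‖φ x y₁ - φ x y₂‖ ≤ K₃ * ‖y₁ - y₂‖) (x₁ x₂ : E) (y₁ y₂ : F) :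
    ‖φ x₁ y₁ - φ x₂ y₂‖ ≤ K₂ * ‖x₁ - x₂‖ + K₃ * ‖y₁ - y₂‖ :=
  (norm_sub_le_norm_sub_add_norm_sub _ (φ x₂ y₁) _).trans (add_le_add (h₂ _ _ _) (h₃ _ _ _))

theorem norm_sub_comp_sections_le (φ : E → F → G) {K₂ K₃ γ : ℝ} (hK₂ : 0 ≤ K₂) (hK₃ : 0 ≤ K₃)
    (h₂ : ∀ x₁ x₂ y, ‖φ x₁ y - φ x₂ y‖ ≤ K₂ * ‖x₁ - x₂‖)
    (h₃ : ∀ x y₁ y₂, ‖φ x y₁ - φ x y₂‖ ≤ K₃ * ‖y₁ - y₂‖) {xu : ℝ → E} {xs : ℝ → F}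
    (hxu : ∀ τ₁ τ₂, ‖xu τ₁ - xu τ₂‖ ≤ γ * |τ₁ - τ₂|)
    (hxs : ∀ τ₁ τ₂, ‖xs τ₁ - xs τ₂‖ ≤ γ * |τ₁ - τ₂|) (a b : ℝ) :
    ‖φ (xu a) (xs a) - φ (xu b) (xs b)‖ ≤ (K₂ + K₃) * γ * |a - b| :=
  calc ‖φ (xu a) (xs a) - φ (xu b) (xs b)‖
      ≤ K₂ * ‖xu a - xu b‖ + K₃ * ‖xs a - xs b‖ :=
        norm_sub_le_of_partial_lipschitz φ h₂ h₃ _ _ _ _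
    _ ≤ K₂ * (γ * |a - b|) + K₃ * (γ * |a - b|) := by
          gcongr
          exacts [hxu a b, hxs a b]
    _ = (K₂ + K₃) * γ * |a - b| := by ring

theorem norm_sub_comp_sections_le_of_partial_lipschitz (φ : ℝ → E → F → G) {K₁ K₂ K₃ γ : ℝ}
    (hK₂ : 0 ≤ K₂) (hK₃ : 0 ≤ K₃)
    (h₁ : ∀ τ₁ τ₂ x y, ‖φ τ₁ x y - φ τ₂ x y‖ ≤ K₁ * |τ₁ - τ₂|)
    (h₂ : ∀ τ x₁ x₂ y, ‖φ τ x₁ y - φ τ x₂ y‖ ≤ K₂ * ‖x₁ - x₂‖)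
    (h₃ : ∀ τ x y₁ y₂, ‖φ τ x y₁ - φ τ x y₂‖ ≤ K₃ * ‖y₁ - y₂‖) {xu : ℝ → E} {xs : ℝ → F}
    (hxu : ∀ τ₁ τ₂, ‖xu τ₁ - xu τ₂‖ ≤ γ * |τ₁ - τ₂|)
    (hxs : ∀ τ₁ τ₂, ‖xs τ₁ - xs τ₂‖ ≤ γ * |τ₁ - τ₂|) (a b : ℝ) :
    ‖φ a (xu a) (xs a) - φ b (xu b) (xs b)‖ ≤ (K₁ + K₂ * γ + K₃ * γ) * |a - b| :=
  calc ‖φ a (xu a) (xs a) - φ b (xu b) (xs b)‖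
      ≤ ‖φ a (xu a) (xs a) - φ b (xu a) (xs a)‖ + ‖φ b (xu a) (xs a) - φ b (xu b) (xs b)‖ :=
        norm_sub_le_norm_sub_add_norm_sub _ _ _
    _ ≤ K₁ * |a - b| + (K₂ + K₃) * γ * |a - b| :=
        add_le_add (h₁ _ _ _ _)
          (norm_sub_comp_sections_le (φ b) hK₂ hK₃ (h₂ b) (h₃ b) hxu hxs a b)
    _ = (K₁ + K₂ * γ + K₃ * γ) * |a - b| := by ring

theorem abs_sub_hitting_time_le (f : ℝ → E → F → ℝ) {Λ γ : ℝ} (hΛ : 0 < Λ)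
    (hsmall : 2 * Λ ^ 2 * γ < 1)
    (hf1 : ∀ τ₁ τ₂ x y, Λ⁻¹ * |τ₁ - τ₂| ≤ |f τ₁ x y - f τ₂ x y|)
    (hf2 : ∀ τ x₁ x₂ y, |f τ x₁ y - f τ x₂ y| ≤ Λ * ‖x₁ - x₂‖)
    (hf3 : ∀ τ x y₁ y₂, |f τ x y₁ - f τ x y₂| ≤ Λ * ‖y₁ - y₂‖) {xu : ℝ → E} {xs : ℝ → F}
    (hxu : ∀ τ₁ τ₂, ‖xu τ₁ - xu τ₂‖ ≤ γ * |τ₁ - τ₂|)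
    (hxs : ∀ τ₁ τ₂, ‖xs τ₁ - xs τ₂‖ ≤ γ * |τ₁ - τ₂|)
    {τm : ℝ → ℝ} (hτm : ∀ τ, f (τm τ) (xu (τm τ)) (xs (τm τ)) = τ) (τ₁ τ₂ : ℝ) :
    |τm τ₁ - τm τ₂| ≤ Λ / (1 - 2 * Λ ^ 2 * γ) * |τ₁ - τ₂| := by
  set a := τm τ₁
  set b := τm τ₂
  have hhit : f a (xu a) (xs a) - f b (xu b) (xs b) = τ₁ - τ₂ := by rw [hτm, hτm]
  have hsections : |f b (xu b) (xs b) - f b (xu a) (xs a)| ≤ (Λ + Λ) * γ * |b - a| :=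
    norm_sub_comp_sections_le (f b) hΛ.le hΛ.le (hf2 b) (hf3 b) hxu hxs b a
  have hexpand : Λ⁻¹ * |a - b| ≤ |τ₁ - τ₂| + (Λ + Λ) * γ * |a - b| :=
    calc Λ⁻¹ * |a - b| ≤ |f a (xu a) (xs a) - f b (xu a) (xs a)| := hf1 _ _ _ _
      _ ≤ |f a (xu a) (xs a) - f b (xu b) (xs b)| + |f b (xu b) (xs b) - f b (xu a) (xs a)| :=
          abs_sub_le _ _ _
      _ ≤ |τ₁ - τ₂| + (Λ + Λ) * γ * |a - b| := by
          rw [hhit, abs_sub_comm a b]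
          exact add_le_add_right hsections _
  have hcontract : (1 - 2 * Λ ^ 2 * γ) * |a - b| ≤ Λ * |τ₁ - τ₂| := by
    have := mul_le_mul_of_nonneg_left hexpand hΛ.le
    rw [← mul_assoc, mul_inv_cancel₀ hΛ.ne'] at this
    linarith
  rw [div_mul_eq_mul_div, le_div_iff₀ (by linarith)]
  linarith

end PartialLipschitz

theorem graph_transform_stable_lipschitz_general
    {E F : Type*} [NormedAddCommGroup E] [NormedAddCommGroup F]
    (f : ℝ → E → F → ℝ) (gs : ℝ → E → F → F) (Λ₁ γ P₁ P₂ P₃ : ℝ)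
    (hΛ₁ : 0 < Λ₁) (hγ : 0 ≤ γ) (hsmall : 2 * Λ₁ ^ 2 * γ < 1)
    (hP₁ : 0 ≤ P₁) (hP₂ : 0 ≤ P₂) (hP₃ : 0 ≤ P₃)
    (hf1 : ∀ τ₁ τ₂ x y, Λ₁⁻¹ * |τ₁ - τ₂| ≤ |f τ₁ x y - f τ₂ x y|)
    (hf2 : ∀ τ x₁ x₂ y, |f τ x₁ y - f τ x₂ y| ≤ Λ₁ * ‖x₁ - x₂‖)
    (hf3 : ∀ τ x y₁ y₂, |f τ x y₁ - f τ x y₂| ≤ Λ₁ * ‖y₁ - y₂‖)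
    (hg1 : ∀ τ₁ τ₂ x y, ‖gs τ₁ x y - gs τ₂ x y‖ ≤ P₁ * |τ₁ - τ₂|)
    (hg2 : ∀ τ x₁ x₂ y, ‖gs τ x₁ y - gs τ x₂ y‖ ≤ P₂ * ‖x₁ - x₂‖)
    (hg3 : ∀ τ x y₁ y₂, ‖gs τ x y₁ - gs τ x y₂‖ ≤ P₃ * ‖y₁ - y₂‖)
    (xu : ℝ → E) (xs : ℝ → F)
    (hxu : ∀ τ₁ τ₂, ‖xu τ₁ - xu τ₂‖ ≤ γ * |τ₁ - τ₂|)
    (hxs : ∀ τ₁ τ₂, ‖xs τ₁ - xs τ₂‖ ≤ γ * |τ₁ - τ₂|)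
    (τm : ℝ → ℝ) (hτm : ∀ τ, f (τm τ) (xu (τm τ)) (xs (τm τ)) = τ)
    (xs1 : ℝ → F) (hxs1 : ∀ τ, xs1 τ = gs (τm τ) (xu (τm τ)) (xs (τm τ))) :
    ∀ τ₁ τ₂, ‖xs1 τ₁ - xs1 τ₂‖ ≤
      (Λ₁ * (P₁ + P₂ * γ + P₃ * γ) / (1 - 2 * Λ₁ ^ 2 * γ)) * |τ₁ - τ₂| := by
  intro τ₁ τ₂
  rw [hxs1, hxs1]
  calc ‖gs (τm τ₁) (xu (τm τ₁)) (xs (τm τ₁)) - gs (τm τ₂) (xu (τm τ₂)) (xs (τm τ₂))‖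
      ≤ (P₁ + P₂ * γ + P₃ * γ) * |τm τ₁ - τm τ₂| :=
        norm_sub_comp_sections_le_of_partial_lipschitz gs hP₂ hP₃ hg1 hg2 hg3 hxu hxs _ _
    _ ≤ (P₁ + P₂ * γ + P₃ * γ) * (Λ₁ / (1 - 2 * Λ₁ ^ 2 * γ) * |τ₁ - τ₂|) := by
        gcongr
        exact abs_sub_hitting_time_le f hΛ₁ hsmall hf1 hf2 hf3 hxu hxs hτm τ₁ τ₂
    _ = Λ₁ * (P₁ + P₂ * γ + P₃ * γ) / (1 - 2 * Λ₁ ^ 2 * γ) * |τ₁ - τ₂| := by ring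

/-- The Lipschitz estimate (act14) for the stable component of the
graph transform: with f expanding in τ at rate Λ₁⁻¹ and Λ₁-Lipschitz in the other
variables, g^s partially Lipschitz with constants P₁, P₂, P₃, γ-Lipschitz sections
x^u, x^s with 2Λ₁²γ < 1, and τ⁻ the backward hitting parameter, the transformed
stable component x₁^s(τ) = g^s(τ⁻(τ), x^u(τ⁻(τ)), x^s(τ⁻(τ))) is Lipschitz with
constant Λ₁(P₁ + P₂γ + P₃γ)/(1 − 2Λ₁²γ). -/
theorem graph_transform_stable_lipschitz
    {E F : Type*} [NormedAddCommGroup E] [NormedSpace ℝ E] [CompleteSpace E]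
    [NormedAddCommGroup F] [NormedSpace ℝ F] [CompleteSpace F]
    (f : ℝ → E → F → ℝ) (gs : ℝ → E → F → F) (Λ₁ γ P₁ P₂ P₃ : ℝ)
    (hΛ₁ : 0 < Λ₁) (hγ : 0 ≤ γ) (hsmall : 2 * Λ₁ ^ 2 * γ < 1)
    (hP₁ : 0 ≤ P₁) (hP₂ : 0 ≤ P₂) (hP₃ : 0 ≤ P₃)
    (hf1 : ∀ τ₁ τ₂ x y, Λ₁⁻¹ * |τ₁ - τ₂| ≤ |f τ₁ x y - f τ₂ x y|)
    (hf2 : ∀ τ x₁ x₂ y, |f τ x₁ y - f τ x₂ y| ≤ Λ₁ * ‖x₁ - x₂‖)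
    (hf3 : ∀ τ x y₁ y₂, |f τ x y₁ - f τ x y₂| ≤ Λ₁ * ‖y₁ - y₂‖)
    (hg1 : ∀ τ₁ τ₂ x y, ‖gs τ₁ x y - gs τ₂ x y‖ ≤ P₁ * |τ₁ - τ₂|)
    (hg2 : ∀ τ x₁ x₂ y, ‖gs τ x₁ y - gs τ x₂ y‖ ≤ P₂ * ‖x₁ - x₂‖)
    (hg3 : ∀ τ x y₁ y₂, ‖gs τ x y₁ - gs τ x y₂‖ ≤ P₃ * ‖y₁ - y₂‖)
    (xu : ℝ → E) (xs : ℝ → F)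
    (hxu : ∀ τ₁ τ₂, ‖xu τ₁ - xu τ₂‖ ≤ γ * |τ₁ - τ₂|)
    (hxs : ∀ τ₁ τ₂, ‖xs τ₁ - xs τ₂‖ ≤ γ * |τ₁ - τ₂|)
    (τm : ℝ → ℝ) (hτm : ∀ τ, f (τm τ) (xu (τm τ)) (xs (τm τ)) = τ)
    (xs1 : ℝ → F) (hxs1 : ∀ τ, xs1 τ = gs (τm τ) (xu (τm τ)) (xs (τm τ))) :
    ∀ τ₁ τ₂, ‖xs1 τ₁ - xs1 τ₂‖ ≤
      (Λ₁ * (P₁ + P₂ * γ + P₃ * γ) / (1 - 2 * Λ₁ ^ 2 * γ)) * |τ₁ - τ₂| :=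
  graph_transform_stable_lipschitz_general f gs Λ₁ γ P₁ P₂ P₃ hΛ₁ hγ hsmall hP₁ hP₂ hP₃ hf1 hf2 hf3
    hg1 hg2 hg3 xu xs hxu hxs τm hτm xs1 hxs1
end

section
/- Let E and F be real Banach spaces, Λ₁ > 0, γ ≥ 0 with 2 γ Λ₁² < 1. Let f : ℝ × E × F → ℝ satisfy |f(τ₁, x, y) − f(τ₂, x, y)| ≥ Λ₁^{−1} |τ₁ − τ₂|, |f(τ, x₁, y) − f(τ, x₂, y)| ≤ Λ₁ ‖x₁ − x₂‖, |f(τ, x, y₁) − f(τ, x, y₂)| ≤ Λ₁ ‖y₁ − y₂‖ for all arguments. For ℓ = 1, 2 let x^{(u,ℓ)} : ℝ → E and x^{(s,ℓ)} : ℝ → F be γ-Lipschitz, and suppose τ₁⁻, τ₂⁻, τ ∈ ℝ satisfy f(τ_ℓ⁻, x^{(u,ℓ)}(τ_ℓ⁻), x^{(s,ℓ)}(τ_ℓ⁻)) = τ for ℓ = 1, 2. Then |τ₁⁻ − τ₂⁻| ≤ [Λ₁ / (Λ₁^{−1} − 2 γ Λ₁)] ( ‖x^{(u,1)}(τ₁⁻)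 − x^{(u,2)}(τ₁⁻)‖ + ‖x^{(s,1)}(τ₁⁻) − x^{(s,2)}(τ₁⁻)‖ ). -/
/-! Moving the base point from `τ₂⁻` to `τ₁⁻` costs at most `γ |τ₁⁻ − τ₂⁻|` in each of the
two Lipschitz sections, so the Lipschitz bounds of `f` in `x` and `y` give
`|f(τ₁⁻, p₂) − τ| ≤ Λ₁ (2 γ |τ₁⁻ − τ₂⁻| + A)`, where `p₂` is the point of the second pair
of sections at `τ₂⁻` and `A` is the distance of the sections at `τ₁⁻`. Expansion of `f` in `τ`
bounds the left side below by `Λ₁⁻¹ |τ₁⁻ − τ₂⁻|`, and the smallness `2 γ Λ₁² < 1` lets the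
`γ`-term be absorbed. -/

lemma abs_sub_le_mul_norm_add_norm {E F : Type*} [SeminormedAddCommGroup E]
    [SeminormedAddCommGroup F] {g : E → F → ℝ} {Λ : ℝ}
    (hx : ∀ x₁ x₂ y, |g x₁ y - g x₂ y| ≤ Λ * ‖x₁ - x₂‖)
    (hy : ∀ x y₁ y₂, |g x y₁ - g x y₂| ≤ Λ * ‖y₁ - y₂‖) (x₁ x₂ : E) (y₁ y₂ : F) :
    |g x₁ y₁ - g x₂ y₂| ≤ Λ * (‖x₁ - x₂‖ + ‖y₁ - y₂‖) :=
  calc |g x₁ y₁ - g x₂ y₂| ≤ |g x₁ y₁ - g x₂ y₁| + |g x₂ y₁ - g x₂ y₂| := abs_sub_le _ _ _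
    _ ≤ Λ * ‖x₁ - x₂‖ + Λ * ‖y₁ - y₂‖ := add_le_add (hx _ _ _) (hy _ _ _)
    _ = Λ * (‖x₁ - x₂‖ + ‖y₁ - y₂‖) := (mul_add _ _ _).symm

lemma norm_sub_le_mul_abs_add_norm_sub {E : Type*} [SeminormedAddCommGroup E]
    {x y : ℝ → E} {γ : ℝ} (hy : ∀ s t, ‖y s - y t‖ ≤ γ * |s - t|) (s t : ℝ) :
    ‖y t - x s‖ ≤ γ * |s - t| + ‖x s - y s‖ :=
  calc ‖y t - x s‖ ≤ ‖y t - y s‖ + ‖y s - x s‖ := norm_sub_le_norm_sub_add_norm_sub _ _ _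
    _ = ‖y t - y s‖ + ‖x s - y s‖ := by rw [norm_sub_rev (y s)]
    _ ≤ γ * |s - t| + ‖x s - y s‖ := by
      gcongr
      simpa only [abs_sub_comm] using hy t s

lemma le_div_mul_of_inv_mul_le {Λ γ d A : ℝ} (hΛ : 0 < Λ) (hsmall : 2 * γ * Λ ^ 2 < 1)
    (h : Λ⁻¹ * d ≤ Λ * (2 * γ * d + A)) :
    d ≤ Λ / (Λ⁻¹ - 2 * γ * Λ) * A := by
  have hden : Λ⁻¹ - 2 * γ * Λ = (1 - 2 * γ * Λ ^ 2) / Λ := by field_simp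
  have hpos : 0 < Λ⁻¹ - 2 * γ * Λ := by rw [hden]; exact div_pos (by linarith) hΛ
  rw [div_mul_eq_mul_div, le_div_iff₀ hpos]
  linarith

theorem backward_hitting_parameter_estimate_general
    {E F : Type*} [NormedAddCommGroup E] [NormedAddCommGroup F]
    (f : ℝ → E → F → ℝ) (Λ₁ γ : ℝ) (hΛ₁ : 0 < Λ₁)
    (hsmall : 2 * γ * Λ₁ ^ 2 < 1)
    (hf1 : ∀ τ₁ τ₂ x y, Λ₁⁻¹ * |τ₁ - τ₂| ≤ |f τ₁ x y - f τ₂ x y|)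
    (hf2 : ∀ τ x₁ x₂ y, |f τ x₁ y - f τ x₂ y| ≤ Λ₁ * ‖x₁ - x₂‖)
    (hf3 : ∀ τ x y₁ y₂, |f τ x y₁ - f τ x y₂| ≤ Λ₁ * ‖y₁ - y₂‖)
    (xu₁ xu₂ : ℝ → E) (xs₁ xs₂ : ℝ → F)
    (hxu₂ : ∀ τ₁ τ₂, ‖xu₂ τ₁ - xu₂ τ₂‖ ≤ γ * |τ₁ - τ₂|)
    (hxs₂ : ∀ τ₁ τ₂, ‖xs₂ τ₁ - xs₂ τ₂‖ ≤ γ * |τ₁ - τ₂|)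
    (τ₁m τ₂m τ : ℝ)
    (h₁ : f τ₁m (xu₁ τ₁m) (xs₁ τ₁m) = τ)
    (h₂ : f τ₂m (xu₂ τ₂m) (xs₂ τ₂m) = τ) :
    |τ₁m - τ₂m| ≤ (Λ₁ / (Λ₁⁻¹ - 2 * γ * Λ₁)) *
      (‖xu₁ τ₁m - xu₂ τ₁m‖ + ‖xs₁ τ₁m - xs₂ τ₁m‖) := by
  refine le_div_mul_of_inv_mul_le hΛ₁ hsmall ?_
  have hu := norm_sub_le_mul_abs_add_norm_sub (x := xu₁) hxu₂ τ₁m τ₂m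
  have hs := norm_sub_le_mul_abs_add_norm_sub (x := xs₁) hxs₂ τ₁m τ₂m
  calc Λ₁⁻¹ * |τ₁m - τ₂m|
      ≤ |f τ₁m (xu₂ τ₂m) (xs₂ τ₂m) - f τ₂m (xu₂ τ₂m) (xs₂ τ₂m)| := hf1 _ _ _ _
    _ = |f τ₁m (xu₂ τ₂m) (xs₂ τ₂m) - f τ₁m (xu₁ τ₁m) (xs₁ τ₁m)| := by rw [h₁, h₂]
    _ ≤ Λ₁ * (‖xu₂ τ₂m - xu₁ τ₁m‖ + ‖xs₂ τ₂m - xs₁ τ₁m‖) :=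
      abs_sub_le_mul_norm_add_norm (hf2 τ₁m) (hf3 τ₁m) _ _ _ _
    _ ≤ Λ₁ * (2 * γ * |τ₁m - τ₂m| + (‖xu₁ τ₁m - xu₂ τ₁m‖ + ‖xs₁ τ₁m - xs₂ τ₁m‖)) :=
      mul_le_mul_of_nonneg_left (by linarith) hΛ₁.le

/-- Estimate (ctr2) in the contraction proof: if two γ-Lipschitz
sections have backward hitting parameters τ₁⁻, τ₂⁻ landing at the same τ under
the expanding map f, then |τ₁⁻ − τ₂⁻| is controlled by the C⁰ distance of the
sections at τ₁⁻. -/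
theorem backward_hitting_parameter_estimate
    {E F : Type*} [NormedAddCommGroup E] [NormedSpace ℝ E] [CompleteSpace E]
    [NormedAddCommGroup F] [NormedSpace ℝ F] [CompleteSpace F]
    (f : ℝ → E → F → ℝ) (Λ₁ γ : ℝ) (hΛ₁ : 0 < Λ₁) (hγ : 0 ≤ γ)
    (hsmall : 2 * γ * Λ₁ ^ 2 < 1)
    (hf1 : ∀ τ₁ τ₂ x y, Λ₁⁻¹ * |τ₁ - τ₂| ≤ |f τ₁ x y - f τ₂ x y|)
    (hf2 : ∀ τ x₁ x₂ y, |f τ x₁ y - f τ x₂ y| ≤ Λ₁ * ‖x₁ - x₂‖)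
    (hf3 : ∀ τ x y₁ y₂, |f τ x y₁ - f τ x y₂| ≤ Λ₁ * ‖y₁ - y₂‖)
    (xu₁ xu₂ : ℝ → E) (xs₁ xs₂ : ℝ → F)
    (hxu₁ : ∀ τ₁ τ₂, ‖xu₁ τ₁ - xu₁ τ₂‖ ≤ γ * |τ₁ - τ₂|)
    (hxu₂ : ∀ τ₁ τ₂, ‖xu₂ τ₁ - xu₂ τ₂‖ ≤ γ * |τ₁ - τ₂|)
    (hxs₁ : ∀ τ₁ τ₂, ‖xs₁ τ₁ - xs₁ τ₂‖ ≤ γ * |τ₁ - τ₂|)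
    (hxs₂ : ∀ τ₁ τ₂, ‖xs₂ τ₁ - xs₂ τ₂‖ ≤ γ * |τ₁ - τ₂|)
    (τ₁m τ₂m τ : ℝ)
    (h₁ : f τ₁m (xu₁ τ₁m) (xs₁ τ₁m) = τ)
    (h₂ : f τ₂m (xu₂ τ₂m) (xs₂ τ₂m) = τ) :
    |τ₁m - τ₂m| ≤ (Λ₁ / (Λ₁⁻¹ - 2 * γ * Λ₁)) *
      (‖xu₁ τ₁m - xu₂ τ₁m‖ + ‖xs₁ τ₁m - xs₂ τ₁m‖) :=
  backward_hitting_parameter_estimate_general f Λ₁ γ hΛ₁ hsmall hf1 hf2 hf3 xu₁ xu₂ xs₁ xs₂ hxu₂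
    hxs₂ τ₁m τ₂m τ h₁ h₂
end

section
/- Let E and F be real Banach spaces, Λ₁ > 0, Π̂₂ > 0, Π₃ ≥ 0, γ ≥ 0 with γ Λ₁ Π̂₂ < 1. Let f : ℝ × E × F → ℝ satisfy |f(τ, x₁, y) − f(τ, x₂, y)| ≤ Λ₁ ‖x₁ − x₂‖ and |f(τ, x, y₁) − f(τ, x, y₂)| ≤ Λ₁ ‖y₁ − y₂‖ for all arguments, and let g^u : ℝ × E × E' → E (with E' = F) satisfy the co-Lipschitz lower bound ‖g^u(τ, x₁, y) − g^u(τ, x₂, y)‖ ≥ Π̂₂^{−1} ‖x₁ − x₂‖ and the Lipschitz bound ‖g^u(τ, x, y₁) − g^u(τ, x, y₂)‖ ≤ Π₃ ‖y₁ − y₂‖ for all arguments. Let τ ∈ ℝ, u₁, u₂ ∈ E, y₁, y₂ ∈ F, τ₁⁺, τ₂⁺ ∈ ℝ, and let X₁, X₂ : ℝ → E with X₂ γ-Lipschitz, such that f(τ, u_ℓ, y_ℓ) = τ_ℓ⁺ and g^u(τ, u_ℓ, y_ℓ) = X_ℓ(τ_ℓ⁺) for ℓ = 1, 2. Then ‖u₁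 − u₂‖ ≤ [Π̂₂ / (1 − γ Λ₁ Π̂₂)] ( ‖X₁(τ₁⁺) − X₂(τ₁⁺)‖ + (Π₃ + γ Λ₁) ‖y₁ − y₂‖ ). -/
/-- Combination of steps (ctr4) and (ctr5) in the contraction proof:
the difference of the unstable components u₁, u₂ of the graph transforms of two
sections at the same parameter τ is controlled by the C⁰ distance of the original
sections. Here Phat₂ is the co-Lipschitz constant Π̂₂ of g^u, and P₃ = Π₃. -/
theorem graph_transform_unstable_contraction_estimate
    {E F : Type*} [NormedAddCommGroup E] [NormedSpace ℝ E] [CompleteSpace E]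
    [NormedAddCommGroup F] [NormedSpace ℝ F] [CompleteSpace F]
    (f : ℝ → E → F → ℝ) (gu : ℝ → E → F → E) (Λ₁ Phat₂ P₃ γ : ℝ)
    (hΛ₁ : 0 < Λ₁) (hPhat₂ : 0 < Phat₂) (hP₃ : 0 ≤ P₃) (hγ : 0 ≤ γ)
    (hsmall : γ * Λ₁ * Phat₂ < 1)
    (hf2 : ∀ τ x₁ x₂ y, |f τ x₁ y - f τ x₂ y| ≤ Λ₁ * ‖x₁ - x₂‖)
    (hf3 : ∀ τ x y₁ y₂, |f τ x y₁ - f τ x y₂| ≤ Λ₁ * ‖y₁ - y₂‖)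
    (hg2 : ∀ τ x₁ x₂ y, Phat₂⁻¹ * ‖x₁ - x₂‖ ≤ ‖gu τ x₁ y - gu τ x₂ y‖)
    (hg3 : ∀ τ x y₁ y₂, ‖gu τ x y₁ - gu τ x y₂‖ ≤ P₃ * ‖y₁ - y₂‖)
    (τ : ℝ) (u₁ u₂ : E) (y₁ y₂ : F) (τ₁p τ₂p : ℝ) (X₁ X₂ : ℝ → E)
    (hX₂ : ∀ s₁ s₂, ‖X₂ s₁ - X₂ s₂‖ ≤ γ * |s₁ - s₂|)
    (hf₁ : f τ u₁ y₁ = τ₁p) (hf₂' : f τ u₂ y₂ = τ₂p)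
    (hg₁ : gu τ u₁ y₁ = X₁ τ₁p) (hg₂' : gu τ u₂ y₂ = X₂ τ₂p) :
    ‖u₁ - u₂‖ ≤ (Phat₂ / (1 - γ * Λ₁ * Phat₂)) *
      (‖X₁ τ₁p - X₂ τ₁p‖ + (P₃ + γ * Λ₁) * ‖y₁ - y₂‖) := by

  set d := ‖u₁ - u₂‖ with hd
  set A := ‖X₁ τ₁p - X₂ τ₁p‖ + (P₃ + γ * Λ₁) * ‖y₁ - y₂‖ with hA
  have hτ : |τ₁p - τ₂p| ≤ Λ₁ * d + Λ₁ * ‖y₁ - y₂‖ := by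
    rw [← hf₁, ← hf₂']
    calc |f τ u₁ y₁ - f τ u₂ y₂|
        ≤ |f τ u₁ y₁ - f τ u₂ y₁| + |f τ u₂ y₁ - f τ u₂ y₂| := abs_sub_le _ _ _
      _ ≤ Λ₁ * d + Λ₁ * ‖y₁ - y₂‖ := add_le_add (hf2 τ u₁ u₂ y₁) (hf3 τ u₂ y₁ y₂)
  have key : Phat₂⁻¹ * d ≤ A + γ * Λ₁ * d := by
    calc Phat₂⁻¹ * d ≤ ‖gu τ u₁ y₂ - gu τ u₂ y₂‖ := hg2 τ u₁ u₂ y₂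
      _ ≤ ‖gu τ u₁ y₂ - gu τ u₁ y₁‖ + ‖gu τ u₁ y₁ - gu τ u₂ y₂‖ := norm_sub_le_norm_sub_add_norm_sub _ _ _
      _ ≤ P₃ * ‖y₁ - y₂‖ + (‖X₁ τ₁p - X₂ τ₁p‖ + γ * |τ₁p - τ₂p|) := by
          gcongr
          · rw [norm_sub_rev y₁ y₂]; exact hg3 τ u₁ y₂ y₁
          · rw [hg₁, hg₂']
            calc ‖X₁ τ₁p - X₂ τ₂p‖ ≤ ‖X₁ τ₁p - X₂ τ₁p‖ + ‖X₂ τ₁p - X₂ τ₂p‖ :=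
                  norm_sub_le_norm_sub_add_norm_sub _ _ _
              _ ≤ ‖X₁ τ₁p - X₂ τ₁p‖ + γ * |τ₁p - τ₂p| := by gcongr; exact hX₂ _ _
      _ ≤ P₃ * ‖y₁ - y₂‖ + (‖X₁ τ₁p - X₂ τ₁p‖ + γ * (Λ₁ * d + Λ₁ * ‖y₁ - y₂‖)) := by gcongr
      _ = A + γ * Λ₁ * d := by rw [hA]; ring
  have hpos : 0 < 1 - γ * Λ₁ * Phat₂ := by linarith
  have key2 : d * (1 - γ * Λ₁ * Phat₂) ≤ Phat₂ * A := by
    have := mul_le_mul_of_nonneg_left key hPhat₂.le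
    have h1 : Phat₂ * (Phat₂⁻¹ * d) = d := by field_simp
    nlinarith
  rw [div_mul_eq_mul_div, le_div_iff₀ hpos]
  linarith
end

section
/- Let E and F be real Banach spaces, Λ₁ > 0, Π̂₂ > 0, Π₁ᵘ, Π₃ᵘ ≥ 0, γ ≥ 0 with Λ₁ Π̂₂ γ < 1. Let f : ℝ × E × F → ℝ satisfy |f(τ₁, x, y) − f(τ₂, x, y)| ≤ Λ₁ |τ₁ − τ₂|, |f(τ, x₁, y) − f(τ, x₂, y)| ≤ Λ₁ ‖x₁ − x₂‖, and |f(τ, x, y₁) − f(τ, x, y₂)| ≤ Λ₁ ‖y₁ − y₂‖ for all arguments. Let g^u : ℝ × E × F → E satisfy ‖g^u(τ₁, x, y) − g^u(τ₂, x, y)‖ ≤ Π₁ᵘ |τ₁ − τ₂|, ‖g^u(τ, x₁, y) − g^u(τ, x₂, y)‖ ≥ Π̂₂^{−1} ‖x₁ − x₂‖, and ‖g^u(τ, x, y₁) − g^u(τ, x, y₂)‖ ≤ Π₃ᵘ ‖y₁ − y₂‖ for all arguments. Let x^u : ℝ → E and x^s : ℝ → F be γ-Lipschitz, and let x₁^u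 : ℝ → E and τ⁺ : ℝ → ℝ satisfy f(τ, x₁^u(τ), x^s(τ)) = τ⁺(τ) and g^u(τ, x₁^u(τ), x^s(τ)) = x^u(τ⁺(τ)) for all τ. Then for all τ₁, τ₂: ‖x₁^u(τ₁) − x₁^u(τ₂)‖ ≤ (1 − Λ₁ Π̂₂ γ)^{−1} [ Λ₁ Π̂₂ (1 + γ) γ + Π̂₂ (Π₁ᵘ + Π₃ᵘ γ) ] |τ₁ − τ₂|. -/
/-- Combination of estimates (act17)–(act21): the unstable component
x₁^u of the graph transform of a γ-Lipschitz section (x^u, x^s), defined implicitly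
by f(τ, x₁^u(τ), x^s(τ)) = τ⁺(τ) and g^u(τ, x₁^u(τ), x^s(τ)) = x^u(τ⁺(τ)), is
Lipschitz with constant (1 − Λ₁Π̂₂γ)⁻¹[Λ₁Π̂₂(1+γ)γ + Π̂₂(Π₁ᵘ + Π₃ᵘγ)]. -/
theorem graph_transform_unstable_lipschitz
    {E F : Type*} [NormedAddCommGroup E] [NormedSpace ℝ E] [CompleteSpace E]
    [NormedAddCommGroup F] [NormedSpace ℝ F] [CompleteSpace F]
    (f : ℝ → E → F → ℝ) (gu : ℝ → E → F → E) (Λ₁ Phat₂ P₁u P₃u γ : ℝ)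
    (hΛ₁ : 0 < Λ₁) (hPhat₂ : 0 < Phat₂) (hP₁u : 0 ≤ P₁u) (hP₃u : 0 ≤ P₃u)
    (hγ : 0 ≤ γ) (hsmall : Λ₁ * Phat₂ * γ < 1)
    (hf1 : ∀ τ₁ τ₂ x y, |f τ₁ x y - f τ₂ x y| ≤ Λ₁ * |τ₁ - τ₂|)
    (hf2 : ∀ τ x₁ x₂ y, |f τ x₁ y - f τ x₂ y| ≤ Λ₁ * ‖x₁ - x₂‖)
    (hf3 : ∀ τ x y₁ y₂, |f τ x y₁ - f τ x y₂| ≤ Λ₁ * ‖y₁ - y₂‖)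
    (hg1 : ∀ τ₁ τ₂ x y, ‖gu τ₁ x y - gu τ₂ x y‖ ≤ P₁u * |τ₁ - τ₂|)
    (hg2 : ∀ τ x₁ x₂ y, Phat₂⁻¹ * ‖x₁ - x₂‖ ≤ ‖gu τ x₁ y - gu τ x₂ y‖)
    (hg3 : ∀ τ x y₁ y₂, ‖gu τ x y₁ - gu τ x y₂‖ ≤ P₃u * ‖y₁ - y₂‖)
    (xu : ℝ → E) (xs : ℝ → F)
    (hxu : ∀ τ₁ τ₂, ‖xu τ₁ - xu τ₂‖ ≤ γ * |τ₁ - τ₂|)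
    (hxs : ∀ τ₁ τ₂, ‖xs τ₁ - xs τ₂‖ ≤ γ * |τ₁ - τ₂|)
    (xu1 : ℝ → E) (τp : ℝ → ℝ)
    (hτp : ∀ τ, f τ (xu1 τ) (xs τ) = τp τ)
    (hxu1 : ∀ τ, gu τ (xu1 τ) (xs τ) = xu (τp τ)) :
    ∀ τ₁ τ₂, ‖xu1 τ₁ - xu1 τ₂‖ ≤
      (1 - Λ₁ * Phat₂ * γ)⁻¹ *
        (Λ₁ * Phat₂ * (1 + γ) * γ + Phat₂ * (P₁u + P₃u * γ)) * |τ₁ - τ₂| := by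
  intro τ₁ τ₂
  set a₁ := xu1 τ₁
  set a₂ := xu1 τ₂
  set b₁ := xs τ₁
  set b₂ := xs τ₂
  set d := |τ₁ - τ₂| with hdd
  set D := ‖a₁ - a₂‖ with hDD
  have hd0 : (0:ℝ) ≤ d := abs_nonneg _
  have hD0 : (0:ℝ) ≤ D := norm_nonneg _
  have hbs : ‖b₁ - b₂‖ ≤ γ * d := hxs τ₁ τ₂
  -- Step A: bound on |τp τ₁ - τp τ₂|
  have hA : |τp τ₁ - τp τ₂| ≤ Λ₁ * d + Λ₁ * D + Λ₁ * (γ * d) := by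
    have hsplit : τp τ₁ - τp τ₂ =
        (f τ₁ a₁ b₁ - f τ₂ a₁ b₁) + ((f τ₂ a₁ b₁ - f τ₂ a₂ b₁) +
          (f τ₂ a₂ b₁ - f τ₂ a₂ b₂)) := by
      rw [← hτp τ₁, ← hτp τ₂]; ring
    calc |τp τ₁ - τp τ₂|
        ≤ |f τ₁ a₁ b₁ - f τ₂ a₁ b₁| + (|f τ₂ a₁ b₁ - f τ₂ a₂ b₁| +
            |f τ₂ a₂ b₁ - f τ₂ a₂ b₂|) := by
          rw [hsplit]
          exact (abs_add_le _ _).trans (by gcongr; exact abs_add_le _ _)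
      _ ≤ Λ₁ * d + Λ₁ * D + Λ₁ * (γ * d) := by
          have h1 := hf1 τ₁ τ₂ a₁ b₁
          have h2 := hf2 τ₂ a₁ a₂ b₁
          have h3 : |f τ₂ a₂ b₁ - f τ₂ a₂ b₂| ≤ Λ₁ * (γ * d) :=
            (hf3 τ₂ a₂ b₁ b₂).trans (mul_le_mul_of_nonneg_left hbs hΛ₁.le)
          linarith
  -- Step B: main inequality
  have hB : Phat₂⁻¹ * D ≤ γ * (Λ₁ * d + Λ₁ * D + Λ₁ * (γ * d)) + P₁u * d + P₃u * (γ * d) := by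
    have hsplit : gu τ₁ a₁ b₁ - gu τ₁ a₂ b₁ =
        (gu τ₁ a₁ b₁ - gu τ₂ a₂ b₂) + ((gu τ₂ a₂ b₂ - gu τ₁ a₂ b₂) +
          (gu τ₁ a₂ b₂ - gu τ₁ a₂ b₁)) := by abel
    calc Phat₂⁻¹ * D ≤ ‖gu τ₁ a₁ b₁ - gu τ₁ a₂ b₁‖ := hg2 τ₁ a₁ a₂ b₁
      _ ≤ ‖gu τ₁ a₁ b₁ - gu τ₂ a₂ b₂‖ + (‖gu τ₂ a₂ b₂ - gu τ₁ a₂ b₂‖ +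
            ‖gu τ₁ a₂ b₂ - gu τ₁ a₂ b₁‖) := by
          rw [hsplit]
          exact (norm_add_le _ _).trans (by gcongr; exact norm_add_le _ _)
      _ ≤ γ * (Λ₁ * d + Λ₁ * D + Λ₁ * (γ * d)) + P₁u * d + P₃u * (γ * d) := by
          have h1 : ‖gu τ₁ a₁ b₁ - gu τ₂ a₂ b₂‖ ≤ γ * (Λ₁ * d + Λ₁ * D + Λ₁ * (γ * d)) := by
            rw [hxu1 τ₁, hxu1 τ₂]
            exact (hxu _ _).trans (mul_le_mul_of_nonneg_left hA hγ)
          have h2 : ‖gu τ₂ a₂ b₂ - gu τ₁ a₂ b₂‖ ≤ P₁u * d := by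
            have := hg1 τ₂ τ₁ a₂ b₂
            rwa [abs_sub_comm] at this
          have h3 : ‖gu τ₁ a₂ b₂ - gu τ₁ a₂ b₁‖ ≤ P₃u * (γ * d) := by
            have hb : ‖b₂ - b₁‖ ≤ γ * d := by rwa [norm_sub_rev]
            exact (hg3 τ₁ a₂ b₂ b₁).trans (mul_le_mul_of_nonneg_left hb hP₃u)
          linarith
  -- conclude
  have hpos : 0 < 1 - Λ₁ * Phat₂ * γ := by linarith
  have key : D * (1 - Λ₁ * Phat₂ * γ) ≤
      (Λ₁ * Phat₂ * (1 + γ) * γ + Phat₂ * (P₁u + P₃u * γ)) * d := by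
    have hmul := mul_le_mul_of_nonneg_left hB (le_of_lt hPhat₂)
    have hinv : Phat₂ * (Phat₂⁻¹ * D) = D := by
      field_simp
    nlinarith [hmul]
  calc D = D * (1 - Λ₁ * Phat₂ * γ) * (1 - Λ₁ * Phat₂ * γ)⁻¹ := by
        field_simp
    _ ≤ (Λ₁ * Phat₂ * (1 + γ) * γ + Phat₂ * (P₁u + P₃u * γ)) * d * (1 - Λ₁ * Phat₂ * γ)⁻¹ := by
        gcongr
    _ = (1 - Λ₁ * Phat₂ * γ)⁻¹ * (Λ₁ * Phat₂ * (1 + γ) * γ + Phat₂ * (P₁u + P₃u * γ)) * d := by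
        ring
end
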